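/- arXiv:2009.13274 — 7 statements merged into one kernel-verified Lean document; each statement's English description precedes it below -/
import Mathlib

section
/- (FORMULA(1), the acyclic rendering of membership.) For every natural number d and all ZF sets r and s: there exists m such that for all k, (k = ι^[d+1] r or k = ι^[d] s) implies m ∈^(d+1) k, if and only if r ∈ s. -/
/-- The singleton operator on ZF sets. -/
def ι (x : ZFSet) : ZFSet := {x}

/-- Iterated membership: `iterMem d m k` says `m ∈^d k`. -/
def iterMem : ℕ → ZFSet → ZFSet → Prop
  | 0, m, k => m = k
  | d + 1, m, k => ∃ k' : ZFSet, k' ∈ k ∧ iterMem d m k'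

lemma mem_iter_singleton (d : ℕ) (x k : ZFSet) :
    k ∈ ι^[d + 1] x ↔ k = ι^[d] x := by
  rw [Function.iterate_succ_apply']
  simp [ι]

lemma iterMem_iter (d : ℕ) (m x : ZFSet) : iterMem d m (ι^[d] x) ↔ m = x := by
  induction d with
  | zero => simp [iterMem]
  | succ d ih =>
    constructor
    · rintro ⟨k', hk', hm⟩
      rw [mem_iter_singleton] at hk'
      subst hk'
      exact ih.mp hm
    · rintro rfl
      exact ⟨ι^[d] m, (mem_iter_singleton d m _).mpr rfl, ih.mpr rfl⟩

lemma iterMem_succ_iter (d : ℕ) (m s : ZFSet) :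
    iterMem (d + 1) m (ι^[d] s) ↔ m ∈ s := by
  induction d with
  | zero =>
    constructor
    · rintro ⟨k', hk', rfl⟩; exact hk'
    · exact fun h => ⟨m, h, rfl⟩
  | succ d ih =>
    constructor
    · rintro ⟨k', hk', hm⟩
      rw [mem_iter_singleton] at hk'
      subst hk'
      exact ih.mp hm
    · intro h
      exact ⟨ι^[d] s, (mem_iter_singleton d s _).mpr rfl, ih.mpr h⟩

theorem formula1_mem (d : ℕ) (r s : ZFSet) :
    (∃ m : ZFSet, ∀ k : ZFSet,
        (k = ι^[d + 1] r ∨ k = ι^[d] s) → iterMem (d + 1) m k) ↔ r ∈ s := by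
  constructor
  · rintro ⟨m, hm⟩
    have h1 := hm _ (Or.inl rfl)
    have h2 := hm _ (Or.inr rfl)
    rw [iterMem_iter] at h1
    subst h1
    exact (iterMem_succ_iter d m s).mp h2
  · intro h
    refine ⟨r, fun k hk => ?_⟩
    rcases hk with rfl | rfl
    · exact (iterMem_iter (d + 1) r r).mpr rfl
    · exact (iterMem_succ_iter d r s).mpr h
end

section
/- (Acyclic recovery of the second projection of a Wiener pair.) For all ZF sets x, y and a: there exists c ∈ W x y with ∅ ∉ c and such that some s ∈ c has a ∈ s, if and only if a = y. -/
/-- The Wiener pair of `x` and `y`. -/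
def W (x y : ZFSet) : ZFSet := {{{x}, ∅}, {{y}}}

theorem wiener_snd_acyclic (x y a : ZFSet) :
    (∃ c : ZFSet, c ∈ W x y ∧ ∅ ∉ c ∧ ∃ s : ZFSet, s ∈ c ∧ a ∈ s) ↔ a = y := by
  constructor
  · rintro ⟨c, hc, hne, s, hs, ha⟩
    simp only [W, ZFSet.mem_insert_iff, ZFSet.mem_singleton] at hc
    rcases hc with rfl | rfl
    · exact absurd (by simp) hne
    · simp only [ZFSet.mem_singleton] at hs
      subst hs
      simpa using ha
  · rintro rfl
    refine ⟨{{a}}, by simp [W], ?_, {a}, by simp, by simp⟩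
    simp only [ZFSet.mem_singleton]
    intro h
    have := h ▸ ZFSet.mem_singleton.mpr (rfl : a = a)
    exact ZFSet.notMem_empty a this
end

section
/- (Value-level form of the translated membership formula ∈_d.) Let d be a natural number and let a, b, x, y be ZF sets with a = ι^[d+1] x and b = ι^[d] y. Then: there exists z such that for every w, (a = ι^[d] w or b = ι^[d] w) implies z ∈ w, if and only if x ∈ y. -/
theorem mem_d_value_level (d : ℕ) (a b x y : ZFSet)
    (ha : a = ι^[d + 1] x) (hb : b = ι^[d] y) :
    (∃ z : ZFSet, ∀ w : ZFSet, (a = ι^[d] w ∨ b = ι^[d] w) → z ∈ w) ↔ x ∈ y := by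
  have hinj : Function.Injective ι := fun u v h => by
    have := ZFSet.ext_iff.mp h u
    simpa [ι] using this
  have hinj' : Function.Injective (ι^[d]) := hinj.iterate d
  subst ha hb
  constructor
  · rintro ⟨z, hz⟩
    have h1 : z ∈ ι x := hz (ι x) (Or.inl (Function.iterate_succ_apply ι d x))
    have h2 : z ∈ y := hz y (Or.inr rfl)
    have : z = x := by simpa [ι] using h1
    rwa [this] at h2
  · intro hxy
    refine ⟨x, fun w hw => ?_⟩
    rcases hw with h | h
    · have : ι x = w := hinj' (by rw [← h, Function.iterate_succ_apply])
      rw [← this]; simp [ι]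
    · have : y = w := hinj' h
      rwa [← this]
end

section
/- (Acyclic translation of a single membership atomic formula.) For all ZF sets x and y: x ∈ y if and only if there exists a ZF set f such that f is a 2-coding function, W (ι^[1] ∅) (ι^[2] x) ∈ f, W (ι^[2] ∅) (ι^[1] y) ∈ f, and M(f, 1, 2, 1) holds. -/
/-- `f` is an `n`-coding function. -/
def IsCodingFun (n : ℕ) (f : ZFSet) : Prop :=
  (∀ p : ZFSet, p ∈ f → ∃ i : ℕ, 1 ≤ i ∧ i ≤ n ∧ ∃ v : ZFSet, p = W (ι^[i] ∅) v) ∧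
  (∀ i : ℕ, 1 ≤ i → i ≤ n → ∃ v : ZFSet, W (ι^[i] ∅) v ∈ f) ∧
  (∀ i : ℕ, 1 ≤ i → i ≤ n → ∀ v v' : ZFSet,
    W (ι^[i] ∅) v ∈ f → W (ι^[i] ∅) v' ∈ f → v = v')

/-- The translated membership formula `∈_d` between the codes `i` and `j`. -/
def M (f : ZFSet) (i j d : ℕ) : Prop :=
  ∃ e : ZFSet, ∀ w : ZFSet,
    (W (ι^[i] ∅) (ι^[d] w) ∈ f ∨ W (ι^[j] ∅) (ι^[d] w) ∈ f) → e ∈ w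

lemma sing_ne_empty (a : ZFSet) : ({a} : ZFSet) ≠ ∅ := by
  intro h
  have : a ∈ ({a} : ZFSet) := ZFSet.mem_singleton.2 rfl
  rw [h] at this
  exact ZFSet.notMem_empty a this

lemma sing_inj {a b : ZFSet} (h : ({a} : ZFSet) = {b}) : a = b := by
  have : a ∈ ({b} : ZFSet) := h ▸ ZFSet.mem_singleton.2 rfl
  exact ZFSet.mem_singleton.1 this

lemma W_inj {a b c d : ZFSet} (h : W a b = W c d) : a = c ∧ b = d := by
  unfold W at h
  have h1 : ({{a}, ∅} : ZFSet) ∈ ({{{c}, ∅}, {{d}}} : ZFSet) := by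
    rw [← h]; exact ZFSet.mem_insert _ _
  have h2 : ({{b}} : ZFSet) ∈ ({{{c}, ∅}, {{d}}} : ZFSet) := by
    rw [← h]; exact ZFSet.mem_insert_of_mem _ (ZFSet.mem_singleton.2 rfl)
  rcases ZFSet.mem_pair.1 h1 with h1 | h1
  · rcases ZFSet.mem_pair.1 h2 with h2 | h2
    · -- {{b}} = {{c},∅} : impossible since ∅ ∈ rhs
      exfalso
      have : (∅ : ZFSet) ∈ ({{b}} : ZFSet) := by
        rw [h2]; exact ZFSet.mem_insert_of_mem _ (ZFSet.mem_singleton.2 rfl)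
      exact sing_ne_empty b (ZFSet.mem_singleton.1 this).symm
    · constructor
      · have : ({a} : ZFSet) ∈ ({{c}, ∅} : ZFSet) := by
          rw [← h1]; exact ZFSet.mem_insert _ _
        rcases ZFSet.mem_pair.1 this with h3 | h3
        · exact sing_inj h3
        · exact absurd h3 (sing_ne_empty a)
      · exact sing_inj (sing_inj h2)
  · exfalso
    have : (∅ : ZFSet) ∈ ({{d}} : ZFSet) := by
      rw [← h1]; exact ZFSet.mem_insert_of_mem _ (ZFSet.mem_singleton.2 rfl)
    exact sing_ne_empty d (ZFSet.mem_singleton.1 this).symm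

lemma iter12 : ι^[1] (∅ : ZFSet) ≠ ι^[2] ∅ := by
  simp only [Function.iterate_one, Function.iterate_succ, Function.comp_apply,
    Function.iterate_zero, id_eq]
  intro h
  unfold ι at h
  have := sing_inj h
  exact sing_ne_empty ∅ this.symm

theorem mem_iff_acyclic (x y : ZFSet) :
    x ∈ y ↔ ∃ f : ZFSet, IsCodingFun 2 f ∧
      W (ι^[1] ∅) (ι^[2] x) ∈ f ∧ W (ι^[2] ∅) (ι^[1] y) ∈ f ∧ M f 1 2 1 := by
  constructor
  · intro hxy
    refine ⟨{W (ι^[1] ∅) (ι^[2] x), W (ι^[2] ∅) (ι^[1] y)}, ?_, ZFSet.mem_insert _ _,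
      ZFSet.mem_insert_of_mem _ (ZFSet.mem_singleton.2 rfl), ?_⟩
    · refine ⟨?_, ?_, ?_⟩
      · intro p hp
        rcases ZFSet.mem_pair.1 hp with h | h
        · exact ⟨1, le_refl _, by norm_num, _, h⟩
        · exact ⟨2, by norm_num, le_refl _, _, h⟩
      · intro i h1 h2
        interval_cases i
        · exact ⟨_, ZFSet.mem_insert _ _⟩
        · exact ⟨_, ZFSet.mem_insert_of_mem _ (ZFSet.mem_singleton.2 rfl)⟩
      · intro i h1 h2 v v' hv hv'
        interval_cases i
        · rcases ZFSet.mem_pair.1 hv with h | h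
          · rcases ZFSet.mem_pair.1 hv' with h' | h'
            · rw [(W_inj h).2, (W_inj h').2]
            · exact absurd (W_inj h').1 iter12
          · exact absurd (W_inj h).1 iter12
        · rcases ZFSet.mem_pair.1 hv with h | h
          · exact absurd (W_inj h).1.symm iter12
          · rcases ZFSet.mem_pair.1 hv' with h' | h'
            · exact absurd (W_inj h').1.symm iter12
            · rw [(W_inj h).2, (W_inj h').2]
    · refine ⟨x, ?_⟩
      intro w hw
      rcases hw with hw | hw
      · rcases ZFSet.mem_pair.1 hw with h | h
        · have h2 : ι^[1] w = ι^[2] x := (W_inj h).2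
          have : w ∈ ι^[1] w := by
            simp only [Function.iterate_one]; exact ZFSet.mem_singleton.2 rfl
          rw [h2] at this
          simp only [Function.iterate_succ, Function.comp_apply, Function.iterate_one] at this
          have := ZFSet.mem_singleton.1 (show w ∈ ({ι x} : ZFSet) from this)
          rw [this]
          exact ZFSet.mem_singleton.2 rfl
        · exact absurd (W_inj h).1 iter12
      · rcases ZFSet.mem_pair.1 hw with h | h
        · exact absurd (W_inj h).1.symm iter12
        · have h2 : ι^[1] w = ι^[1] y := (W_inj h).2
          simp only [Function.iterate_one] at h2
          have : w = y := sing_inj h2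
          rw [this]; exact hxy
  · rintro ⟨f, hcode, h1, h2, e, hM⟩
    have hex : e ∈ ι x := by
      apply hM (ι x)
      left
      have : ι^[1] (ι x) = ι^[2] x := by
        simp [Function.iterate_succ, Function.iterate_one]
      rw [this]; exact h1
    have hey : e ∈ y := by
      apply hM y
      right
      exact h2
    have : e = x := ZFSet.mem_singleton.1 hex
    rwa [this] at hey
end

section
/- (Acyclic translation of an equality atomic formula.) Let f be a 2-coding function and let x, y be ZF sets with W (ι^[1] ∅) (ι^[1] x) ∈ f and W (ι^[2] ∅) (ι^[1] y) ∈ f. Then: there exists e such that for every v, (W (ι^[1] ∅) v ∈ f or W (ι^[2] ∅) v ∈ f) implies v = e, if and only if x = y. -/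
lemma iota_inj {a b : ZFSet} (h : ι a = ι b) : a = b := by
  have := congrArg (a ∈ ·) h
  simpa [ι] using this

theorem eq_iff_acyclic (f x y : ZFSet) (hf : IsCodingFun 2 f)
    (hx : W (ι^[1] ∅) (ι^[1] x) ∈ f) (hy : W (ι^[2] ∅) (ι^[1] y) ∈ f) :
    (∃ e : ZFSet, ∀ v : ZFSet,
        (W (ι^[1] ∅) v ∈ f ∨ W (ι^[2] ∅) v ∈ f) → v = e) ↔ x = y := by
  obtain ⟨-, -, huniq⟩ := hf
  constructor
  · rintro ⟨e, he⟩
    have h1 : ι^[1] x = e := he _ (Or.inl hx)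
    have h2 : ι^[1] y = e := he _ (Or.inr hy)
    exact iota_inj (by simpa using h1.trans h2.symm)
  · rintro rfl
    refine ⟨ι^[1] x, fun v hv => ?_⟩
    rcases hv with h | h
    · exact huniq 1 le_rfl (by norm_num) _ _ h hx
    · exact huniq 2 (by norm_num) le_rfl _ _ h hy
end

section
/- (The paper's first worked example.) For all ZF sets x, y, z: (x ∈ y and z ∈ y) if and only if there exists a ZF set f such that f is a 3-coding function, W (ι^[1] ∅) (ι^[2] x) ∈ f, W (ι^[2] ∅) (ι^[1] y) ∈ f, W (ι^[3] ∅) (ι^[2] z) ∈ f, and both M(f, 1, 2, 1) and M(f, 3, 2, 1) hold. -/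
lemma iter_ne : ∀ {i j : ℕ}, i ≠ j → ι^[i] ∅ ≠ ι^[j] ∅ := by
  intro i
  induction i with
  | zero =>
    intro j hij
    cases j with
    | zero => exact absurd rfl hij
    | succ j =>
      rw [Function.iterate_succ_apply']
      exact fun h => sing_ne_empty _ h.symm
  | succ i ih =>
    intro j hij
    cases j with
    | zero =>
      rw [Function.iterate_succ_apply']
      exact fun h => sing_ne_empty _ h
    | succ j =>
      rw [Function.iterate_succ_apply', Function.iterate_succ_apply']
      intro h
      exact ih (fun h' => hij (by rw [h'])) (ZFSet.singleton_inj.1 h)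

lemma W_first {i j : ℕ} {v v' : ZFSet} (hij : i ≠ j) :
    W (ι^[i] ∅) v ≠ W (ι^[j] ∅) v' :=
  fun h => iter_ne hij (W_inj h).1

theorem first_example (x y z : ZFSet) :
    (x ∈ y ∧ z ∈ y) ↔ ∃ f : ZFSet, IsCodingFun 3 f ∧
      W (ι^[1] ∅) (ι^[2] x) ∈ f ∧ W (ι^[2] ∅) (ι^[1] y) ∈ f ∧
      W (ι^[3] ∅) (ι^[2] z) ∈ f ∧ M f 1 2 1 ∧ M f 3 2 1 := by
  constructor
  · rintro ⟨hxy, hzy⟩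
    refine ⟨{W (ι^[1] ∅) (ι^[2] x), W (ι^[2] ∅) (ι^[1] y), W (ι^[3] ∅) (ι^[2] z)},
      ⟨?_, ?_, ?_⟩, by simp, by simp, by simp, ⟨x, ?_⟩, ⟨z, ?_⟩⟩
    · intro p hp
      rcases (by simpa using hp) with h | h | h
      · exact ⟨1, le_refl _, by norm_num, _, h⟩
      · exact ⟨2, by norm_num, by norm_num, _, h⟩
      · exact ⟨3, by norm_num, le_refl _, _, h⟩
    · intro i h1 h3
      interval_cases i
      · exact ⟨ι^[2] x, by simp⟩
      · exact ⟨ι^[1] y, by simp⟩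
      · exact ⟨ι^[2] z, by simp⟩
    · intro i h1 h3 v v' hv hv'
      simp only [ZFSet.mem_insert_iff, ZFSet.mem_singleton] at hv hv'
      interval_cases i <;>
        rcases hv with h | h | h <;> rcases hv' with h' | h' | h' <;>
        first
          | (exact ((W_inj h).2).trans ((W_inj h').2).symm)
          | (exact absurd h (W_first (by decide)))
          | (exact absurd h' (W_first (by decide)))
    · intro w hw
      rcases hw with hw | hw <;>
        simp only [ZFSet.mem_insert_iff, ZFSet.mem_singleton] at hw <;>
        rcases hw with h | h | h
      · have hw2 : w = {x} := ZFSet.singleton_inj.1 (W_inj h).2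
        rw [hw2]; simp
      · exact absurd h (W_first (by decide))
      · exact absurd h (W_first (by decide))
      · exact absurd h (W_first (by decide))
      · have hw2 : w = y := ZFSet.singleton_inj.1 (W_inj h).2
        rw [hw2]; exact hxy
      · exact absurd h (W_first (by decide))
    · intro w hw
      rcases hw with hw | hw <;>
        simp only [ZFSet.mem_insert_iff, ZFSet.mem_singleton] at hw <;>
        rcases hw with h | h | h
      · exact absurd h (W_first (by decide))
      · exact absurd h (W_first (by decide))
      · have hw2 : w = {z} := ZFSet.singleton_inj.1 (W_inj h).2
        rw [hw2]; simp
      · exact absurd h (W_first (by decide))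
      · have hw2 : w = y := ZFSet.singleton_inj.1 (W_inj h).2
        rw [hw2]; exact hzy
      · exact absurd h (W_first (by decide))
  · rintro ⟨f, _, h1, h2, h3, ⟨e, he⟩, ⟨e', he'⟩⟩
    constructor
    · have hex : e ∈ ι x := he (ι x) (Or.inl h1)
      have hey : e ∈ y := he y (Or.inr h2)
      rwa [← ZFSet.mem_singleton.1 hex]
    · have hez : e' ∈ ι z := he' (ι z) (Or.inl h3)
      have hey : e' ∈ y := he' y (Or.inr h2)
      rwa [← ZFSet.mem_singleton.1 hez]
end

section
/- (The paper's second worked example, a stratified but cyclic formula.) For all ZF sets x, y, z, w: (x ∈ y and z ∈ y and w ∈ x and w ∈ z) if and only if there exists a ZF set f such that f is a 4-coding function, W (ι^[1] ∅) (ι^[2] x) ∈ f, W (ι^[2] ∅) (ι^[1] y) ∈ f, W (ι^[3] ∅) (ι^[2] z) ∈ f, W (ι^[4] ∅) (ι^[3] w) ∈ f, and M(f, 1, 2, 1), M(f, 3, 2, 1), M(f, 4, 1, 2), and M(f, 4, 3, 2) all hold. -/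
lemma pair_ne_sing (a d : ZFSet) : ({{a}, ∅} : ZFSet) ≠ {{d}} := by
  intro h
  have h0 : (∅ : ZFSet) ∈ ({{a}, ∅} : ZFSet) := by simp
  rw [h] at h0
  exact sing_ne_empty d (ZFSet.mem_singleton.1 h0).symm

lemma W_mem_iff (X c d : ZFSet) : X ∈ W c d ↔ X = {{c}, ∅} ∨ X = {{d}} := by
  simp [W]

lemma iota_iter_inj : ∀ i j : ℕ, ι^[i] ∅ = ι^[j] ∅ → i = j := by
  intro i
  induction i with
  | zero =>
    intro j h
    cases j with
    | zero => rfl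
    | succ j =>
      rw [Function.iterate_succ_apply'] at h
      exact absurd h.symm (sing_ne_empty _)
  | succ i ih =>
    intro j h
    cases j with
    | zero =>
      rw [Function.iterate_succ_apply'] at h
      exact absurd h (sing_ne_empty _)
    | succ j =>
      rw [Function.iterate_succ_apply', Function.iterate_succ_apply'] at h
      exact congrArg Nat.succ (ih j (sing_inj h))

def f4 (x y z w : ZFSet) : ZFSet :=
  {W (ι^[1] ∅) (ι^[2] x), W (ι^[2] ∅) (ι^[1] y), W (ι^[3] ∅) (ι^[2] z), W (ι^[4] ∅) (ι^[3] w)}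

lemma mem_f4 {x y z w p : ZFSet} : p ∈ f4 x y z w ↔
    p = W (ι^[1] ∅) (ι^[2] x) ∨ p = W (ι^[2] ∅) (ι^[1] y) ∨
    p = W (ι^[3] ∅) (ι^[2] z) ∨ p = W (ι^[4] ∅) (ι^[3] w) := by
  simp [f4]

lemma mem_f4_cases {x y z w : ZFSet} {i : ℕ} {v : ZFSet}
    (h : W (ι^[i] ∅) v ∈ f4 x y z w) :
    (i = 1 ∧ v = ι^[2] x) ∨ (i = 2 ∧ v = ι^[1] y) ∨
    (i = 3 ∧ v = ι^[2] z) ∨ (i = 4 ∧ v = ι^[3] w) := by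
  rw [mem_f4] at h
  rcases h with h | h | h | h <;> obtain ⟨h1, h2⟩ := W_inj h
  · exact Or.inl ⟨iota_iter_inj _ _ h1, h2⟩
  · exact Or.inr (Or.inl ⟨iota_iter_inj _ _ h1, h2⟩)
  · exact Or.inr (Or.inr (Or.inl ⟨iota_iter_inj _ _ h1, h2⟩))
  · exact Or.inr (Or.inr (Or.inr ⟨iota_iter_inj _ _ h1, h2⟩))

example (x : ZFSet) : ι^[1] (ι x) = ι^[2] x := rfl
example (x : ZFSet) : ι^[2] (ι x) = ι^[3] x := rfl
theorem second_example (x y z w : ZFSet) :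
    (x ∈ y ∧ z ∈ y ∧ w ∈ x ∧ w ∈ z) ↔ ∃ f : ZFSet, IsCodingFun 4 f ∧
      W (ι^[1] ∅) (ι^[2] x) ∈ f ∧ W (ι^[2] ∅) (ι^[1] y) ∈ f ∧
      W (ι^[3] ∅) (ι^[2] z) ∈ f ∧ W (ι^[4] ∅) (ι^[3] w) ∈ f ∧
      M f 1 2 1 ∧ M f 3 2 1 ∧ M f 4 1 2 ∧ M f 4 3 2 := by
  constructor
  · rintro ⟨hxy, hzy, hwx, hwz⟩
    refine ⟨f4 x y z w, ⟨?_, ?_, ?_⟩, ?_, ?_, ?_, ?_, ?_, ?_, ?_, ?_⟩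
    · intro p hp
      rw [mem_f4] at hp
      rcases hp with h | h | h | h
      · exact ⟨1, by norm_num, by norm_num, _, h⟩
      · exact ⟨2, by norm_num, by norm_num, _, h⟩
      · exact ⟨3, by norm_num, by norm_num, _, h⟩
      · exact ⟨4, by norm_num, by norm_num, _, h⟩
    · intro i h1 h4
      interval_cases i
      · exact ⟨ι^[2] x, by rw [mem_f4]; tauto⟩
      · exact ⟨ι^[1] y, by rw [mem_f4]; tauto⟩
      · exact ⟨ι^[2] z, by rw [mem_f4]; tauto⟩
      · exact ⟨ι^[3] w, by rw [mem_f4]; tauto⟩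
    · intro i h1 h4 v v' hv hv'
      rcases mem_f4_cases hv with ⟨hi, he⟩ | ⟨hi, he⟩ | ⟨hi, he⟩ | ⟨hi, he⟩ <;>
        rcases mem_f4_cases hv' with ⟨hi', he'⟩ | ⟨hi', he'⟩ | ⟨hi', he'⟩ | ⟨hi', he'⟩ <;>
        first | omega | (rw [he, he'])
    · rw [mem_f4]; tauto
    · rw [mem_f4]; tauto
    · rw [mem_f4]; tauto
    · rw [mem_f4]; tauto
    · -- M f 1 2 1
      refine ⟨x, fun u hu => ?_⟩
      rcases hu with h | h <;>
        rcases mem_f4_cases h with ⟨hi, he⟩ | ⟨hi, he⟩ | ⟨hi, he⟩ | ⟨hi, he⟩ <;>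
        try omega
      · rw [sing_inj he]; exact ZFSet.mem_singleton.2 rfl
      · rw [sing_inj he]; exact hxy
    · -- M f 3 2 1
      refine ⟨z, fun u hu => ?_⟩
      rcases hu with h | h <;>
        rcases mem_f4_cases h with ⟨hi, he⟩ | ⟨hi, he⟩ | ⟨hi, he⟩ | ⟨hi, he⟩ <;>
        try omega
      · rw [sing_inj he]; exact ZFSet.mem_singleton.2 rfl
      · rw [sing_inj he]; exact hzy
    · -- M f 4 1 2
      refine ⟨w, fun u hu => ?_⟩
      rcases hu with h | h <;>
        rcases mem_f4_cases h with ⟨hi, he⟩ | ⟨hi, he⟩ | ⟨hi, he⟩ | ⟨hi, he⟩ <;>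
        try omega
      · rw [sing_inj (sing_inj he)]; exact ZFSet.mem_singleton.2 rfl
      · rw [sing_inj (sing_inj he)]; exact hwx
    · -- M f 4 3 2
      refine ⟨w, fun u hu => ?_⟩
      rcases hu with h | h <;>
        rcases mem_f4_cases h with ⟨hi, he⟩ | ⟨hi, he⟩ | ⟨hi, he⟩ | ⟨hi, he⟩ <;>
        try omega
      · rw [sing_inj (sing_inj he)]; exact ZFSet.mem_singleton.2 rfl
      · rw [sing_inj (sing_inj he)]; exact hwz
  · rintro ⟨f, -, h1, h2, h3, h4, ⟨e1, he1⟩, ⟨e2, he2⟩, ⟨e3, he3⟩, ⟨e4, he4⟩⟩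
    have hx : e1 = x := ZFSet.mem_singleton.1 (he1 (ι x) (Or.inl h1))
    have hz : e2 = z := ZFSet.mem_singleton.1 (he2 (ι z) (Or.inl h3))
    have hw3 : e3 = w := ZFSet.mem_singleton.1 (he3 (ι w) (Or.inl h4))
    have hw4 : e4 = w := ZFSet.mem_singleton.1 (he4 (ι w) (Or.inl h4))
    refine ⟨hx ▸ he1 y (Or.inr h2), hz ▸ he2 y (Or.inr h2),
      hw3 ▸ he3 x (Or.inr h1), hw4 ▸ he4 z (Or.inr h3)⟩
end
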